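/- arXiv:math/0610616 — 2 statements merged into one kernel-verified Lean document; each statement's English description precedes it below -/
import Mathlib

section
/- For all n, m and k, the number of permutations of [n] with m cycles and exactly k cyclic occurrences of the consecutive pattern 213, the number with m cycles and exactly k cyclic occurrences of the consecutive pattern 231, and the number with m cycles and exactly k cyclic occurrences of the consecutive pattern 312 are all equal. -/
open scoped Classical

noncomputable section

/-- `x` is the minimal element of its cycle under `π`. -/
def isCycMin {n : ℕ} (π : Equiv.Perm (Fin n)) (x : Fin n) : Prop :=
  ∀ y : Fin n, π.SameCycle x y → x ≤ y

/-- The minimal elements of the cycles of `π`, listed in decreasing order. -/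
def cycMins {n : ℕ} (π : Equiv.Perm (Fin n)) : List (Fin n) :=
  ((List.finRange n).filter fun x => decide (isCycMin π x)).reverse

/-- The number of elements in the cycle of `x` under `π` (a fixed point has cycle length 1). -/
def cycLen {n : ℕ} (π : Equiv.Perm (Fin n)) (x : Fin n) : ℕ :=
  Nat.card {y : Fin n // π.SameCycle x y}

/-- The cycle of `x` under `π`, written as the list `x, π x, π² x, …`. -/
def seg {n : ℕ} (π : Equiv.Perm (Fin n)) (x : Fin n) : List (Fin n) :=
  (List.range (cycLen π x)).map fun j => (π ^ j) x

/-- `Ψ(π)`: the word obtained by erasing the parentheses from the standard cycle form of `π`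
(each cycle starts with its smallest element; cycles are in decreasing order of their minima). -/
def psiList {n : ℕ} (π : Equiv.Perm (Fin n)) : List (Fin n) :=
  (cycMins π).foldr (fun m acc => seg π m ++ acc) []

/-- The word `Ψ(π)` as a function `ℕ → ℕ` (positions and values both 0-indexed). -/
def wordN {n : ℕ} (π : Equiv.Perm (Fin n)) (i : ℕ) : ℕ :=
  ((psiList π).map fun x => (x : ℕ)).getD i 0

/-- Positions `i` and `j` of the word `Ψ(π)` hold elements lying in the same cycle of `π`. -/
def sameCycleAt {n : ℕ} (π : Equiv.Perm (Fin n)) (i j : ℕ) : Prop :=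
  ∃ a b : Fin n, (psiList π)[i]? = some a ∧ (psiList π)[j]? = some b ∧ π.SameCycle a b

/-- The number of cycles of `π`, fixed points included. -/
def cyc {n : ℕ} (π : Equiv.Perm (Fin n)) : ℕ :=
  Nat.card {x : Fin n // isCycMin π x}

/-- The number of cyclic occurrences of the length-3 consecutive pattern described by `P`
in `π`: positions `i, i+1, i+2` of `Ψ(π)` whose values satisfy `P` and which all lie in the
same cycle of `π`. -/
def consecC {n : ℕ} (π : Equiv.Perm (Fin n)) (P : ℕ → ℕ → ℕ → Prop) : ℕ :=
  Nat.card {i : ℕ // i + 2 < n ∧ P (wordN π i) (wordN π (i + 1)) (wordN π (i + 2)) ∧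
    sameCycleAt π i (i + 1) ∧ sameCycleAt π (i + 1) (i + 2)}

/-- The number of positions `i` so that `w i, w (i+1), w (i+2)` (all positions `< m`)
satisfy `P`. -/
def consecLine (m : ℕ) (w : ℕ → ℕ) (P : ℕ → ℕ → ℕ → Prop) : ℕ :=
  Nat.card {i : ℕ // i + 2 < m ∧ P (w i) (w (i + 1)) (w (i + 2))}

/-!
Since `Ψ(π)` writes each cycle from its minimum, the letters `x, π x, π² x` are consecutive in
`Ψ(π)` exactly when neither `π x` nor `π² x` is the minimum of the cycle; so occurrences can be
counted by their first letter `x`.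

Conjugating `π` by the involution that reverses the order of the non-minimal letters of each
cycle keeps the cycles and their minima, and turns a 213-window at `x` into a 231-window at the
image of `x` (no window starting at a cycle minimum is of either kind). Passing to `π⁻¹` reads
each cycle backwards, turning the 213-window at `x` into the 312-window at `π² x`. Both maps
are bijections of the symmetric group preserving the number of cycles.
-/

open Function Equiv

namespace Finset

variable {α : Type*} [LinearOrder α] {s : Finset α} {a b : α}

/-- The order-reversing involution of `s`, extended by the identity outside `s`. -/
def reflect (s : Finset α) (a : α) : α :=
  if h : a ∈ s then s.orderIsoOfFin rfl ((s.orderIsoOfFin rfl).symm ⟨a, h⟩).rev else a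

theorem reflect_of_mem (h : a ∈ s) :
    s.reflect a = s.orderIsoOfFin rfl ((s.orderIsoOfFin rfl).symm ⟨a, h⟩).rev :=
  dif_pos h

theorem reflect_of_notMem (h : a ∉ s) : s.reflect a = a :=
  dif_neg h

theorem reflect_mem (h : a ∈ s) : s.reflect a ∈ s := by
  rw [reflect_of_mem h]
  exact Subtype.prop _

theorem reflect_mem_iff : s.reflect a ∈ s ↔ a ∈ s :=
  ⟨fun h => by_contra fun ha => ha (reflect_of_notMem ha ▸ h), reflect_mem⟩

theorem reflect_reflect (s : Finset α) (a : α) : s.reflect (s.reflect a) = a := by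
  by_cases h : a ∈ s
  · have hsub : (⟨s.reflect a, reflect_mem h⟩ : s) =
        s.orderIsoOfFin rfl ((s.orderIsoOfFin rfl).symm ⟨a, h⟩).rev :=
      Subtype.ext (reflect_of_mem h)
    rw [reflect_of_mem (reflect_mem h), hsub, OrderIso.symm_apply_apply, Fin.rev_rev,
      OrderIso.apply_symm_apply]
  · rw [reflect_of_notMem h, reflect_of_notMem h]

theorem reflect_lt_reflect_iff (ha : a ∈ s) (hb : b ∈ s) :
    s.reflect a < s.reflect b ↔ b < a := by
  rw [reflect_of_mem ha, reflect_of_mem hb, Subtype.coe_lt_coe, OrderIso.lt_iff_lt,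
    Fin.rev_lt_rev, OrderIso.lt_iff_lt, Subtype.mk_lt_mk]

end Finset

section Cycles

variable {n : ℕ} {π ρ : Perm (Fin n)} {x y m : Fin n}

theorem isCycMin.eq_of_sameCycle (hx : isCycMin π x) (hy : isCycMin π y)
    (h : π.SameCycle x y) : x = y :=
  le_antisymm (hx y h) (hy x h.symm)

theorem not_isCycMin_of_lt (h : π.SameCycle x y) (hlt : y < x) : ¬ isCycMin π x :=
  fun hx => (hx y h).not_gt hlt

theorem exists_isCycMin_sameCycle (π : Perm (Fin n)) (x : Fin n) :
    ∃ m, isCycMin π m ∧ π.SameCycle m x := by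
  let s : Finset (Fin n) := {y | π.SameCycle x y}
  have hx : x ∈ s := by simp [s, Perm.SameCycle.refl]
  have hmin : s.min' ⟨x, hx⟩ ∈ s := s.min'_mem _
  simp only [s, Finset.mem_filter, Finset.mem_univ, true_and] at hmin
  exact ⟨_, fun y hy => s.min'_le y (by simpa [s] using hmin.trans hy), hmin.symm⟩

theorem isCycMin_congr (h : ρ.SameCycle = π.SameCycle) : isCycMin ρ = isCycMin π := by
  unfold isCycMin
  rw [h]

theorem cyc_congr (h : ρ.SameCycle = π.SameCycle) : cyc ρ = cyc π := by
  unfold cyc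
  rw [isCycMin_congr h]

theorem cycLen_eq_minimalPeriod (π : Perm (Fin n)) (x : Fin n) :
    cycLen π x = minimalPeriod π x := by
  have hpos := minimalPeriod_pos_of_mem_periodicPts (π.injective.mem_periodicPts x)
  let f (j : Fin (minimalPeriod π x)) : {y // π.SameCycle x y} :=
    ⟨(π ^ (j : ℕ)) x, Perm.sameCycle_pow_right.2 (.refl _ _)⟩
  have hf : Bijective f := by
    refine ⟨fun i j hij => ?_, fun ⟨y, hy⟩ => ?_⟩
    · simp only [f, Subtype.mk.injEq, Perm.coe_pow] at hij
      exact Fin.ext ((iterate_eq_iterate_iff_of_lt_minimalPeriod i.2 j.2).1 hij)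
    · obtain ⟨i, rfl⟩ := hy.exists_nat_pow_eq
      exact ⟨⟨i % minimalPeriod π x, Nat.mod_lt _ hpos⟩, by
        simp [f, Perm.coe_pow, iterate_mod_minimalPeriod_eq]⟩
  rw [cycLen, ← Nat.card_eq_of_bijective f hf, Nat.card_fin]

theorem cycLen_pos (π : Perm (Fin n)) (x : Fin n) : 0 < cycLen π x := by
  rw [cycLen_eq_minimalPeriod]
  exact minimalPeriod_pos_of_mem_periodicPts (π.injective.mem_periodicPts x)

theorem pow_cycLen_apply_self (π : Perm (Fin n)) (x : Fin n) : (π ^ cycLen π x) x = x := by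
  rw [cycLen_eq_minimalPeriod, Perm.coe_pow, iterate_minimalPeriod]

theorem pow_apply_eq_pow_apply_iff {i j : ℕ} (hi : i < cycLen π x) (hj : j < cycLen π x) :
    (π ^ i) x = (π ^ j) x ↔ i = j := by
  rw [cycLen_eq_minimalPeriod] at hi hj
  rw [Perm.coe_pow, Perm.coe_pow, iterate_eq_iterate_iff_of_lt_minimalPeriod hi hj]

theorem length_seg (π : Perm (Fin n)) (x : Fin n) : (seg π x).length = cycLen π x := by
  simp [seg]

theorem getElem?_seg {j : ℕ} (hj : j < cycLen π x) : (seg π x)[j]? = some ((π ^ j) x) := by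
  simp [seg, hj]

theorem mem_seg : y ∈ seg π x ↔ π.SameCycle x y := by
  refine ⟨?_, fun h => ?_⟩
  · simp only [seg, List.mem_map, List.mem_range]
    rintro ⟨j, -, rfl⟩
    exact Perm.sameCycle_pow_right.2 (.refl _ _)
  · obtain ⟨j, rfl⟩ := h.exists_nat_pow_eq
    have hj := Nat.mod_lt j (cycLen_pos π x)
    rw [← Nat.mod_add_div j (cycLen π x), pow_add, pow_mul, Perm.mul_apply,
      (π ^ cycLen π x).pow_apply_eq_self_of_apply_eq_self (pow_cycLen_apply_self π x)]
    exact List.mem_of_getElem? (getElem?_seg hj)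

theorem nodup_seg (π : Perm (Fin n)) (x : Fin n) : (seg π x).Nodup := by
  refine (List.nodup_map_iff_inj_on List.nodup_range).2 fun i hi j hj h => ?_
  exact (pow_apply_eq_pow_apply_iff (List.mem_range.1 hi) (List.mem_range.1 hj)).1 h

theorem head?_seg (π : Perm (Fin n)) (x : Fin n) : (seg π x).head? = some x := by
  rw [List.head?_eq_getElem?, getElem?_seg (cycLen_pos π x), pow_zero, Perm.one_apply]

theorem getLast?_seg (π : Perm (Fin n)) (x : Fin n) :
    (seg π x).getLast? = some ((π ^ (cycLen π x - 1)) x) := by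
  rw [List.getLast?_eq_getElem?, length_seg, getElem?_seg (by have := cycLen_pos π x; omega)]

theorem not_isCycMin_pow_apply (hm : isCycMin π m) {j : ℕ} (h0 : 0 < j) (hj : j < cycLen π m) :
    ¬ isCycMin π ((π ^ j) m) := fun h =>
  h0.ne' <| (pow_apply_eq_pow_apply_iff hj (cycLen_pos π m)).1 <| by
    rw [pow_zero, Perm.one_apply]
    exact (hm.eq_of_sameCycle h (Perm.sameCycle_pow_right.2 (.refl _ _))).symm

/-- Inside a cycle the letter after `x` is `π x`; the cycle ends exactly when `π x` is its
minimum, and the next letter then lies in another cycle. -/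
def Follows (π : Perm (Fin n)) (x y : Fin n) : Prop :=
  (π.SameCycle x y → ¬ isCycMin π (π x)) ∧ (¬ isCycMin π (π x) → y = π x)

def IsCycleWord (π : Perm (Fin n)) (w : List (Fin n)) : Prop :=
  w.IsChain (Follows π) ∧ ∀ x ∈ w.getLast?, isCycMin π (π x)

theorem isCycleWord_seg (hm : isCycMin π m) : IsCycleWord π (seg π m) := by
  refine ⟨(List.isChain_map _).2 <| (List.isChain_range _ _).2 fun j hj => ?_, ?_⟩
  · have hnot : ¬ isCycMin π (π ((π ^ j) m)) := by
      rw [← Perm.mul_apply, ← pow_succ']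
      exact not_isCycMin_pow_apply hm j.succ_pos (by omega)
    exact ⟨fun _ => hnot, fun _ => by rw [Nat.succ_eq_add_one, pow_succ', Perm.mul_apply]⟩
  · rw [getLast?_seg]
    rintro x ⟨⟩
    rw [← Perm.mul_apply, ← pow_succ', Nat.sub_add_cancel (cycLen_pos π m),
      pow_cycLen_apply_self]
    exact hm

theorem IsCycleWord.append {u v : List (Fin n)} (hu : IsCycleWord π u)
    (hv : IsCycleWord π v) (h : ∀ x ∈ u.getLast?, ∀ y ∈ v.head?, ¬ π.SameCycle x y) :
    IsCycleWord π (u ++ v) := by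
  refine ⟨hu.1.append hv.1 fun x hx y hy => ⟨fun hxy => (h x hx y hy hxy).elim,
    fun hnot => (hnot (hu.2 x hx)).elim⟩, fun x hx => ?_⟩
  rw [List.getLast?_append] at hx
  cases hlast : v.getLast? with
  | none => rw [hlast, Option.none_or] at hx; exact hu.2 x hx
  | some z => rw [hlast, Option.some_or] at hx; exact hv.2 x (hlast ▸ hx)

theorem not_sameCycle_of_mem_seg {m' : Fin n} (hm : isCycMin π m) (hm' : isCycMin π m')
    (hne : m ≠ m') (hx : x ∈ seg π m) (hy : y ∈ seg π m') : ¬ π.SameCycle x y :=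
  fun hxy => hne <| hm.eq_of_sameCycle hm' <| ((mem_seg.1 hx).trans hxy).trans (mem_seg.1 hy).symm

theorem isCycleWord_flatten_seg {l : List (Fin n)} (hl : ∀ m ∈ l, isCycMin π m)
    (hnd : l.Nodup) : IsCycleWord π (l.map (seg π)).flatten := by
  induction l with
  | nil => exact ⟨List.IsChain.nil, by simp⟩
  | cons m l ih =>
    rw [List.forall_mem_cons] at hl
    rw [List.nodup_cons] at hnd
    refine (isCycleWord_seg hl.1).append (ih hl.2 hnd.2) fun x hx y hy => ?_
    obtain ⟨s, hs, hy⟩ := List.mem_flatten.1 (List.mem_of_mem_head? hy)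
    obtain ⟨m', hm', rfl⟩ := List.mem_map.1 hs
    exact not_sameCycle_of_mem_seg hl.1 (hl.2 m' hm') (ne_of_mem_of_not_mem hm' hnd.1).symm
      (List.mem_of_mem_getLast? hx) hy

theorem IsCycleWord.sameCycle_getElem? {w : List (Fin n)} (hw : IsCycleWord π w) {i : ℕ}
    (hx : w[i]? = some x) (hy : w[i + 1]? = some y) (hxy : π.SameCycle x y) :
    ¬ isCycMin π (π x) ∧ y = π x := by
  obtain ⟨_, rfl⟩ := List.getElem?_eq_some_iff.1 hx
  obtain ⟨hi, rfl⟩ := List.getElem?_eq_some_iff.1 hy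
  have hfollows := List.isChain_iff_getElem.1 hw.1 i hi
  exact ⟨hfollows.1 hxy, hfollows.2 (hfollows.1 hxy)⟩

theorem IsCycleWord.getElem?_succ {w : List (Fin n)} (hw : IsCycleWord π w) {i : ℕ}
    (hx : w[i]? = some x) (h : ¬ isCycMin π (π x)) : w[i + 1]? = some (π x) := by
  obtain ⟨hi, rfl⟩ := List.getElem?_eq_some_iff.1 hx
  by_cases hi1 : i + 1 < w.length
  · rw [List.getElem?_eq_getElem hi1, (List.isChain_iff_getElem.1 hw.1 i hi1).2 h]
  · refine (h (hw.2 _ ?_)).elim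
    rw [List.getLast?_eq_getElem?, show w.length - 1 = i by omega]
    exact List.getElem?_eq_getElem hi

theorem mem_cycMins : x ∈ cycMins π ↔ isCycMin π x := by
  simp [cycMins]

theorem nodup_cycMins (π : Perm (Fin n)) : (cycMins π).Nodup :=
  List.nodup_reverse.2 ((List.nodup_finRange n).filter _)

theorem psiList_eq_flatten (π : Perm (Fin n)) :
    psiList π = ((cycMins π).map (seg π)).flatten := by
  unfold psiList
  induction cycMins π with
  | nil => rfl
  | cons m l ih => simp [ih]

theorem isCycleWord_psiList (π : Perm (Fin n)) : IsCycleWord π (psiList π) :=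
  psiList_eq_flatten π ▸ isCycleWord_flatten_seg (fun _ => mem_cycMins.1) (nodup_cycMins π)

theorem mem_psiList (π : Perm (Fin n)) (x : Fin n) : x ∈ psiList π := by
  obtain ⟨m, hm, hmx⟩ := exists_isCycMin_sameCycle π x
  rw [psiList_eq_flatten]
  exact List.mem_flatten.2 ⟨_, List.mem_map_of_mem (mem_cycMins.2 hm), mem_seg.2 hmx⟩

theorem nodup_psiList (π : Perm (Fin n)) : (psiList π).Nodup := by
  rw [psiList_eq_flatten, List.nodup_flatten, List.pairwise_map]
  refine ⟨by simp [nodup_seg], (nodup_cycMins π).imp_of_mem fun hm hm' hne x hx hx' => ?_⟩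
  exact not_sameCycle_of_mem_seg (mem_cycMins.1 hm) (mem_cycMins.1 hm') hne hx hx' (.refl _ _)

theorem length_psiList (π : Perm (Fin n)) : (psiList π).length = n := by
  simpa using Fintype.card_congr
    ((nodup_psiList π).getEquivOfForallMemList _ (mem_psiList π))

theorem wordN_of_getElem? {i : ℕ} (h : (psiList π)[i]? = some x) : wordN π i = x := by
  simp [wordN, ← List.map_eq_flatMap, List.getD_eq_getElem?_getD, h]

end Cycles

theorem List.Nodup.natCard_index_eq {α : Type*} {w : List α} (hnd : w.Nodup)
    (hall : ∀ x, x ∈ w) {Q : ℕ → Prop} {W : α → Prop}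
    (hQ : ∀ i (hi : i < w.length), Q i ↔ W w[i]) (hlt : ∀ i, Q i → i < w.length) :
    Nat.card {i // Q i} = Nat.card {x // W x} := by
  refine Nat.card_eq_of_bijective (fun i => ⟨w[i.1]'(hlt _ i.2), (hQ _ _).1 i.2⟩)
    ⟨fun i j h => Subtype.ext ((hnd.getElem_inj_iff).1 (congrArg Subtype.val h)), fun x => ?_⟩
  obtain ⟨i, hi, hix⟩ := List.mem_iff_getElem.1 (hall x)
  exact ⟨⟨i, (hQ i hi).2 (hix ▸ x.2)⟩, Subtype.ext hix⟩

def windowCount {n : ℕ} (π : Perm (Fin n)) (P : ℕ → ℕ → ℕ → Prop) : ℕ :=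
  Nat.card {x : Fin n // ¬ isCycMin π (π x) ∧ ¬ isCycMin π (π (π x)) ∧
    P (x : ℕ) (π x : ℕ) (π (π x) : ℕ)}

theorem consecC_eq_windowCount {n : ℕ} (π : Perm (Fin n)) (P : ℕ → ℕ → ℕ → Prop) :
    consecC π P = windowCount π P := by
  have hw := isCycleWord_psiList π
  refine (nodup_psiList π).natCard_index_eq (mem_psiList π) (fun i hi => ?_)
    (fun i h => by rw [length_psiList]; omega)
  have hx : (psiList π)[i]? = some (psiList π)[i] := List.getElem?_eq_getElem hi
  constructor
  · rintro ⟨-, hP, ⟨a, b, ha, hb, hab⟩, ⟨b', c, hb', hc, hbc⟩⟩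
    obtain rfl := Option.some_inj.1 (ha.symm.trans hx)
    obtain ⟨hx1, rfl⟩ := hw.sameCycle_getElem? hx hb hab
    obtain rfl := Option.some_inj.1 (hb'.symm.trans hb)
    obtain ⟨hx2, rfl⟩ := hw.sameCycle_getElem? hb hc hbc
    rw [wordN_of_getElem? hx, wordN_of_getElem? hb, wordN_of_getElem? hc] at hP
    exact ⟨hx1, hx2, hP⟩
  · rintro ⟨hx1, hx2, hP⟩
    have h1 := hw.getElem?_succ hx hx1
    have h2 := hw.getElem?_succ h1 hx2
    refine ⟨?_, ?_, ⟨_, _, hx, h1, Perm.sameCycle_apply_right.2 (.refl _ _)⟩,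
      ⟨_, _, h1, h2, Perm.sameCycle_apply_right.2 (.refl _ _)⟩⟩
    · rw [← length_psiList π]
      exact (List.getElem?_eq_some_iff.1 h2).1
    · rwa [wordN_of_getElem? hx, wordN_of_getElem? h1, wordN_of_getElem? h2]

section Complement

variable {n : ℕ} {π : Perm (Fin n)} {x y : Fin n}

def cycleTail (π : Perm (Fin n)) (x : Fin n) : Finset (Fin n) :=
  {y | π.SameCycle x y ∧ ¬ isCycMin π y}

def tailReflect (π : Perm (Fin n)) (x : Fin n) : Fin n :=
  (cycleTail π x).reflect x

theorem mem_cycleTail_self : x ∈ cycleTail π x ↔ ¬ isCycMin π x := by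
  simp [cycleTail, Perm.SameCycle.refl]

theorem cycleTail_eq_of_sameCycle (h : π.SameCycle x y) : cycleTail π x = cycleTail π y := by
  ext z
  simp only [cycleTail, Finset.mem_filter, Finset.mem_univ, true_and]
  exact ⟨fun hz => ⟨h.symm.trans hz.1, hz.2⟩, fun hz => ⟨h.trans hz.1, hz.2⟩⟩

theorem sameCycle_tailReflect (π : Perm (Fin n)) (x : Fin n) :
    π.SameCycle x (tailReflect π x) := by
  by_cases hx : x ∈ cycleTail π x
  · exact (Finset.mem_filter.1 (Finset.reflect_mem hx)).2.1
  · rw [tailReflect, Finset.reflect_of_notMem hx]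

theorem cycleTail_tailReflect : cycleTail π (tailReflect π x) = cycleTail π x :=
  (cycleTail_eq_of_sameCycle (sameCycle_tailReflect π x)).symm

theorem tailReflect_involutive (π : Perm (Fin n)) : Involutive (tailReflect π) := fun x => by
  rw [tailReflect, cycleTail_tailReflect, tailReflect, Finset.reflect_reflect]

theorem isCycMin_tailReflect : isCycMin π (tailReflect π x) ↔ isCycMin π x := by
  rw [← not_iff_not, ← mem_cycleTail_self, ← mem_cycleTail_self, cycleTail_tailReflect,
    tailReflect, Finset.reflect_mem_iff]

theorem tailReflect_of_isCycMin (h : isCycMin π x) : tailReflect π x = x :=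
  Finset.reflect_of_notMem fun hx => mem_cycleTail_self.1 hx h

theorem tailReflect_lt_tailReflect_iff (h : π.SameCycle x y) (hx : ¬ isCycMin π x)
    (hy : ¬ isCycMin π y) : tailReflect π x < tailReflect π y ↔ y < x := by
  unfold tailReflect
  rw [cycleTail_eq_of_sameCycle h]
  exact Finset.reflect_lt_reflect_iff
    (cycleTail_eq_of_sameCycle h ▸ mem_cycleTail_self.2 hx) (mem_cycleTail_self.2 hy)

def cycleComplement (π : Perm (Fin n)) : Perm (Fin n) :=
  (tailReflect_involutive π).toPerm * π * (tailReflect_involutive π).toPerm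

theorem cycleComplement_apply (π : Perm (Fin n)) (x : Fin n) :
    cycleComplement π x = tailReflect π (π (tailReflect π x)) :=
  rfl

theorem cycleComplement_apply_tailReflect (π : Perm (Fin n)) (x : Fin n) :
    cycleComplement π (tailReflect π x) = tailReflect π (π x) := by
  rw [cycleComplement_apply, tailReflect_involutive π x]

theorem sameCycle_cycleComplement (π : Perm (Fin n)) :
    (cycleComplement π).SameCycle = π.SameCycle := by
  funext x y
  have hconj : cycleComplement π = (tailReflect_involutive π).toPerm * π *
      ((tailReflect_involutive π).toPerm)⁻¹ := by
    rw [Perm.inv_def, Involutive.toPerm_symm]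
    rfl
  rw [hconj, Perm.sameCycle_conj, Perm.inv_def, Involutive.toPerm_symm, Involutive.coe_toPerm]
  have hx := sameCycle_tailReflect π x
  have hy := sameCycle_tailReflect π y
  exact propext ⟨fun h => (hx.trans h).trans hy.symm, fun h => (hx.symm.trans h).trans hy⟩

theorem isCycMin_cycleComplement (π : Perm (Fin n)) :
    isCycMin (cycleComplement π) = isCycMin π :=
  isCycMin_congr (sameCycle_cycleComplement π)

theorem tailReflect_cycleComplement (π : Perm (Fin n)) :
    tailReflect (cycleComplement π) = tailReflect π := by
  unfold tailReflect cycleTail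
  simp only [sameCycle_cycleComplement, isCycMin_cycleComplement]

theorem cycleComplement_involutive : Involutive (cycleComplement (n := n)) := fun π => by
  ext x
  rw [cycleComplement_apply, tailReflect_cycleComplement, cycleComplement_apply,
    tailReflect_involutive, tailReflect_involutive]

theorem cyc_cycleComplement (π : Perm (Fin n)) : cyc (cycleComplement π) = cyc π :=
  cyc_congr (sameCycle_cycleComplement π)

theorem consecC_cycleComplement (π : Perm (Fin n)) :
    consecC (cycleComplement π) (fun a b c => c < a ∧ a < b)
      = consecC π (fun a b c => b < a ∧ a < c) := by
  rw [consecC_eq_windowCount, consecC_eq_windowCount]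
  refine (Nat.card_congr ((tailReflect_involutive π).toPerm.subtypeEquiv fun x => ?_)).symm
  simp only [Involutive.coe_toPerm, cycleComplement_apply_tailReflect,
    isCycMin_cycleComplement, isCycMin_tailReflect, Fin.val_fin_lt]
  refine and_congr_right fun h1 => and_congr_right fun h2 => ?_
  have hx1 : π.SameCycle x (π x) := Perm.sameCycle_apply_right.2 (.refl _ _)
  have hx2 : π.SameCycle x (π (π x)) := Perm.sameCycle_apply_right.2 hx1
  by_cases hx : isCycMin π x
  · rw [tailReflect_of_isCycMin hx]
    exact iff_of_false (fun h => (hx _ hx1).not_gt h.1)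
      (fun h => (hx _ (hx2.trans (sameCycle_tailReflect π _))).not_gt h.1)
  · rw [tailReflect_lt_tailReflect_iff hx2.symm h2 hx, tailReflect_lt_tailReflect_iff hx1 hx h1,
      and_comm]

end Complement

section Inverse

variable {n : ℕ}

theorem sameCycle_inv (π : Perm (Fin n)) : π⁻¹.SameCycle = π.SameCycle := by
  funext x y
  exact propext Perm.sameCycle_inv

theorem cyc_inv (π : Perm (Fin n)) : cyc π⁻¹ = cyc π :=
  cyc_congr (sameCycle_inv π)

theorem consecC_inv (π : Perm (Fin n)) :
    consecC π⁻¹ (fun a b c => b < c ∧ c < a) = consecC π (fun a b c => b < a ∧ a < c) := by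
  rw [consecC_eq_windowCount, consecC_eq_windowCount]
  refine (Nat.card_congr ((π * π).subtypeEquiv fun x => ?_)).symm
  simp only [Perm.mul_apply, Perm.coe_inv, symm_apply_apply, isCycMin_congr (sameCycle_inv π),
    Fin.val_fin_lt]
  have hx1 : π.SameCycle x (π x) := Perm.sameCycle_apply_right.2 (.refl _ _)
  have hx2 : π.SameCycle x (π (π x)) := Perm.sameCycle_apply_right.2 hx1
  refine and_congr_right fun _ => ⟨fun ⟨_, h⟩ => ⟨not_isCycMin_of_lt hx1 h.1, h⟩,
    fun ⟨_, h⟩ => ⟨not_isCycMin_of_lt hx2.symm h.2, h⟩⟩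

end Inverse

theorem card_cyc_consecC_congr {n m k : ℕ} {P Q : ℕ → ℕ → ℕ → Prop}
    (f : Perm (Fin n) ≃ Perm (Fin n)) (hcyc : ∀ π, cyc (f π) = cyc π)
    (hconsec : ∀ π, consecC (f π) Q = consecC π P) :
    Nat.card {π : Perm (Fin n) // cyc π = m ∧ consecC π P = k}
      = Nat.card {π : Perm (Fin n) // cyc π = m ∧ consecC π Q = k} :=
  Nat.card_congr (f.subtypeEquiv fun π => by rw [hcyc, hconsec])

/-- The consecutive patterns 213, 231 and 312 are equidistributed over permutations of
`[n]` with `m` cycles, with respect to cyclic occurrences. -/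
theorem occ213_231_312_equidistributed (n m k : ℕ) :
    Nat.card {π : Equiv.Perm (Fin n) //
        cyc π = m ∧ consecC π (fun a b c => b < a ∧ a < c) = k}
      = Nat.card {π : Equiv.Perm (Fin n) //
          cyc π = m ∧ consecC π (fun a b c => c < a ∧ a < b) = k} ∧
    Nat.card {π : Equiv.Perm (Fin n) //
        cyc π = m ∧ consecC π (fun a b c => c < a ∧ a < b) = k}
      = Nat.card {π : Equiv.Perm (Fin n) //
          cyc π = m ∧ consecC π (fun a b c => b < c ∧ c < a) = k} := by
  have h231 := card_cyc_consecC_congr (n := n) (m := m) (k := k)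
    cycleComplement_involutive.toPerm cyc_cycleComplement consecC_cycleComplement
  have h312 := card_cyc_consecC_congr (m := m) (k := k) (Equiv.inv (Perm (Fin n)))
    cyc_inv consecC_inv
  exact ⟨h231, h231.symm.trans h312⟩
end
end

section
/- For all n ≥ 1 and k, the number of permutations of [n] consisting of a single cycle with exactly k cyclic occurrences of the consecutive pattern 321 equals the number of permutations of [n−1] whose one-line notation has exactly k positions i with σ(i) > σ(i+1) > σ(i+2). -/
open scoped Classical

noncomputable section

/-- The one-line notation of a permutation `σ` of `[m]`, as a function `ℕ → ℕ`
(0-indexed positions and values). -/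
def oneLine {m : ℕ} (σ : Equiv.Perm (Fin m)) (i : ℕ) : ℕ :=
  if h : i < m then (σ ⟨i, h⟩ : ℕ) else 0

/-!
A permutation `π` of `[m + 1]` with a single cycle has standard cycle form `(0 w₁ … w_m)`, so
`Ψ(π)` is `0` followed by the one-line notation of a permutation `σ` of `[m]` shifted up by one,
and all its positions lie in the one cycle. Conversely `σ` determines `π` as the conjugate of the
rotation `i ↦ i + 1` by the word `0 w₁ … w_m`. The leading minimum `0` never starts an
occurrence of `321`, and shifting values up preserves the pattern, so the cyclic occurrences in
`π` are those of `σ`, moved one position to the right.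
-/

open Equiv Equiv.Perm Function

namespace Equiv.Perm

variable {α : Type*} [Fintype α] {π : Perm α} {x : α}

theorem minimalPeriod_eq_card_of_forall_sameCycle (h : ∀ y, π.SameCycle x y) :
    minimalPeriod π x = Fintype.card α := by
  have hpos : 0 < minimalPeriod π x :=
    minimalPeriod_pos_of_mem_periodicPts (π.injective.mem_periodicPts x)
  apply le_antisymm
  · simpa using Fintype.card_le_of_injective (fun j : Fin (minimalPeriod π x) => π^[j] x)
      fun i j hij => Fin.ext (iterate_injOn_Iio_minimalPeriod i.isLt j.isLt hij)
  · refine (Fintype.card_le_of_surjective (fun j : Fin (minimalPeriod π x) => π^[j] x)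
      fun y => ?_).trans_eq (Fintype.card_fin _)
    obtain ⟨i, rfl⟩ := (h y).exists_nat_pow_eq
    exact ⟨⟨i % _, Nat.mod_lt _ hpos⟩, by simp [iterate_mod_minimalPeriod_eq, coe_pow]⟩

theorem pow_mod_card_apply_of_forall_sameCycle (h : ∀ y, π.SameCycle x y) (n : ℕ) :
    (π ^ (n % Fintype.card α)) x = (π ^ n) x := by
  rw [← minimalPeriod_eq_card_of_forall_sameCycle h, coe_pow, coe_pow,
    iterate_mod_minimalPeriod_eq]

theorem bijective_pow_apply_of_forall_sameCycle (h : ∀ y, π.SameCycle x y) :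
    Bijective fun j : Fin (Fintype.card α) => (π ^ (j : ℕ)) x := by
  have hp := minimalPeriod_eq_card_of_forall_sameCycle h
  refine (Fintype.bijective_iff_injective_and_card _).2 ⟨fun i j hij => Fin.ext ?_, by simp⟩
  exact iterate_injOn_Iio_minimalPeriod (f := π) (x := x) (by simp [hp]) (by simp [hp])
    (by simpa [coe_pow] using hij)

theorem exists_decomposeFin_symm_eq_of_apply_zero {m : ℕ} {w : Perm (Fin (m + 1))} (hw : w 0 = 0) :
    ∃ σ, decomposeFin.symm (0, σ) = w := by
  have hfst : (decomposeFin w).1 = 0 := by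
    have := decomposeFin_symm_apply_zero (decomposeFin w).1 (decomposeFin w).2
    rwa [Prod.mk.eta, symm_apply_apply, hw, eq_comm] at this
  exact ⟨(decomposeFin w).2, by rw [← hfst, Prod.mk.eta, symm_apply_apply]⟩

end Equiv.Perm

variable {m : ℕ}

theorem isCycMin_zero (π : Perm (Fin (m + 1))) : isCycMin π 0 := fun y _ => Fin.zero_le y

theorem exists_sameCycle_isCycMin {N : ℕ} (π : Perm (Fin N)) (x : Fin N) :
    ∃ z, π.SameCycle x z ∧ isCycMin π z := by
  obtain ⟨z, hz, hmin⟩ := (Finset.univ.filter (π.SameCycle x)).exists_min_image id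
    ⟨x, Finset.mem_filter.2 ⟨Finset.mem_univ x, .refl π x⟩⟩
  simp only [Finset.mem_filter, Finset.mem_univ, true_and, id] at hz hmin
  exact ⟨z, hz, fun y hy => hmin y (hz.trans hy)⟩

theorem isCycMin_iff_eq_zero {π : Perm (Fin (m + 1))} (h : ∀ y, π.SameCycle 0 y)
    (x : Fin (m + 1)) : isCycMin π x ↔ x = 0 :=
  ⟨fun hx => le_antisymm (hx 0 (h x).symm) x.zero_le, fun hx => hx ▸ isCycMin_zero π⟩

theorem cyc_eq_one_iff {π : Perm (Fin (m + 1))} : cyc π = 1 ↔ ∀ y, π.SameCycle 0 y := by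
  refine ⟨fun h1 y => ?_, fun h => ?_⟩
  · obtain ⟨z, hyz, hz⟩ := exists_sameCycle_isCycMin π y
    have : Subsingleton {x // isCycMin π x} := (Nat.card_eq_one_iff_unique.1 h1).1
    have hz0 : z = 0 := congrArg Subtype.val
      (Subsingleton.elim (⟨z, hz⟩ : {x // isCycMin π x}) ⟨0, isCycMin_zero π⟩)
    exact (hz0 ▸ hyz).symm
  · rw [cyc, Nat.card_congr (Equiv.subtypeEquivRight (isCycMin_iff_eq_zero h)), Nat.card_unique]

section SingleCycle

variable {π : Perm (Fin (m + 1))}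

theorem cycMins_eq_singleton (h : ∀ y, π.SameCycle 0 y) : cycMins π = [0] := by
  simp [cycMins, isCycMin_iff_eq_zero h, List.finRange_succ]

theorem psiList_eq_of_forall_sameCycle (h : ∀ y, π.SameCycle 0 y) :
    psiList π = (List.range (m + 1)).map fun j => (π ^ j) 0 := by
  have hlen : cycLen π 0 = m + 1 := by
    rw [cycLen, Nat.card_congr (Equiv.subtypeUnivEquiv h), Nat.card_fin]
  simp [psiList, cycMins_eq_singleton h, seg, hlen]

theorem wordN_of_forall_sameCycle (h : ∀ y, π.SameCycle 0 y) {i : ℕ} (hi : i < m + 1) :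
    wordN π i = ((π ^ i) 0 : ℕ) := by
  simp [wordN, ← List.map_eq_flatMap, psiList_eq_of_forall_sameCycle h,
    List.getD_eq_getElem?_getD, hi]

theorem consecC_eq_consecLine (h : ∀ y, π.SameCycle 0 y) (P : ℕ → ℕ → ℕ → Prop) :
    consecC π P = consecLine (m + 1) (wordN π) P := by
  have hsame {i j : ℕ} (hi : i < m + 1) (hj : j < m + 1) : sameCycleAt π i j := by
    simp only [sameCycleAt, psiList_eq_of_forall_sameCycle h, List.getElem?_map,
      List.getElem?_range hi, List.getElem?_range hj]
    exact ⟨_, _, rfl, rfl, (h _).symm.trans (h _)⟩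
  refine Nat.card_congr (Equiv.subtypeEquivRight fun i => ⟨fun hi => ⟨hi.1, hi.2.1⟩, fun hi => ?_⟩)
  exact ⟨hi.1, hi.2, hsame (by omega) (by omega), hsame (by omega) (by omega)⟩

end SingleCycle

theorem consecLine_congr {w v : ℕ → ℕ} {P Q : ℕ → ℕ → ℕ → Prop}
    (h : ∀ i, i + 2 < m → (P (w i) (w (i + 1)) (w (i + 2)) ↔ Q (v i) (v (i + 1)) (v (i + 2)))) :
    consecLine m w P = consecLine m v Q :=
  Nat.card_congr (Equiv.subtypeEquivRight fun i => and_congr_right (h i))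

theorem consecLine_succ {w : ℕ → ℕ} {P : ℕ → ℕ → ℕ → Prop} (hw : ¬ P (w 0) (w 1) (w 2)) :
    consecLine (m + 1) w P = consecLine m (fun i => w (i + 1)) P := by
  refine (Nat.card_eq_of_bijective (fun i => ⟨i.1 + 1, by omega, i.2.2⟩) ⟨?_, ?_⟩).symm
  · intro i j hij
    exact Subtype.ext (by simpa using congrArg Subtype.val hij)
  · rintro ⟨_ | i, hi, hP⟩
    · exact absurd hP hw
    · exact ⟨⟨i, by omega, hP⟩, rfl⟩

theorem finRotate_pow_apply_zero {j : ℕ} (hj : j < m + 1) :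
    (finRotate (m + 1) ^ j) 0 = ⟨j, hj⟩ := by
  induction j with
  | zero => rfl
  | succ j ih =>
    rw [pow_succ', mul_apply, ih (by omega), finRotate_apply]
    exact Fin.ext (by rw [Fin.val_add, Fin.val_one', Nat.add_mod_mod, Nat.mod_eq_of_lt hj])

/-- The cycle `(0, σ 0 + 1, …, σ (m - 1) + 1)`: read from `0`, it is the one-line notation of `σ`
shifted up by one. -/
def cycleOfOneLine (σ : Perm (Fin m)) : Perm (Fin (m + 1)) :=
  decomposeFin.symm (0, σ) * finRotate (m + 1) * (decomposeFin.symm (0, σ))⁻¹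

theorem cycleOfOneLine_pow_apply_zero (σ : Perm (Fin m)) {j : ℕ} (hj : j < m + 1) :
    (cycleOfOneLine σ ^ j) 0 = decomposeFin.symm (0, σ) ⟨j, hj⟩ := by
  have h0 : (decomposeFin.symm (0, σ))⁻¹ 0 = 0 := by
    rw [inv_eq_iff_eq, decomposeFin_symm_apply_zero]
  rw [cycleOfOneLine, conj_pow, mul_apply, mul_apply, h0, finRotate_pow_apply_zero hj]

theorem forall_sameCycle_cycleOfOneLine (σ : Perm (Fin m)) (y : Fin (m + 1)) :
    (cycleOfOneLine σ).SameCycle 0 y := by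
  set j := (decomposeFin.symm (0, σ))⁻¹ y
  refine ⟨j, ?_⟩
  rw [zpow_natCast, cycleOfOneLine_pow_apply_zero σ j.isLt, Fin.eta]
  exact apply_symm_apply _ y

theorem cycleOfOneLine_injective : Injective (cycleOfOneLine (m := m)) := by
  intro σ τ h
  have hw : decomposeFin.symm (0, σ) = decomposeFin.symm (0, τ) := Equiv.ext fun j => by
    rw [← cycleOfOneLine_pow_apply_zero σ j.isLt, ← cycleOfOneLine_pow_apply_zero τ j.isLt, h]
  exact congrArg Prod.snd (decomposeFin.symm.injective hw)

theorem exists_conj_finRotate_of_forall_sameCycle {π : Perm (Fin (m + 1))}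
    (h : ∀ y, π.SameCycle 0 y) : ∃ w : Perm (Fin (m + 1)), w 0 = 0 ∧
      w * finRotate (m + 1) * w⁻¹ = π := by
  have hbij := bijective_pow_apply_of_forall_sameCycle h
  have hmod := pow_mod_card_apply_of_forall_sameCycle h
  rw [Fintype.card_fin] at hbij hmod
  set w := Equiv.ofBijective _ hbij
  have hstep (j : Fin (m + 1)) : w (j + 1) = π (w j) := by
    change (π ^ ((j + 1 : Fin (m + 1)) : ℕ)) 0 = π ((π ^ (j : ℕ)) 0)
    rw [Fin.val_add, Fin.val_one', Nat.add_mod_mod, hmod, pow_succ', mul_apply]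
  refine ⟨w, by simp [w], Equiv.ext fun y => ?_⟩
  obtain ⟨j, rfl⟩ := w.surjective y
  change w (finRotate _ (w.symm (w j))) = _
  rw [symm_apply_apply, finRotate_apply, hstep]

theorem exists_cycleOfOneLine_eq {π : Perm (Fin (m + 1))} (h : ∀ y, π.SameCycle 0 y) :
    ∃ σ, cycleOfOneLine σ = π := by
  obtain ⟨w, hw0, rfl⟩ := exists_conj_finRotate_of_forall_sameCycle h
  obtain ⟨σ, rfl⟩ := exists_decomposeFin_symm_eq_of_apply_zero hw0
  exact ⟨σ, rfl⟩

def cycleOfOneLineEquiv : Perm (Fin m) ≃ {π : Perm (Fin (m + 1)) // ∀ y, π.SameCycle 0 y} :=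
  Equiv.ofBijective (fun σ => ⟨cycleOfOneLine σ, forall_sameCycle_cycleOfOneLine σ⟩)
    ⟨fun _ _ h => cycleOfOneLine_injective (congrArg Subtype.val h),
      fun π => (exists_cycleOfOneLine_eq π.2).imp fun _ hσ => Subtype.ext hσ⟩

theorem wordN_cycleOfOneLine_zero (σ : Perm (Fin m)) : wordN (cycleOfOneLine σ) 0 = 0 := by
  rw [wordN_of_forall_sameCycle (forall_sameCycle_cycleOfOneLine σ) m.succ_pos, pow_zero]
  rfl

theorem wordN_cycleOfOneLine_succ (σ : Perm (Fin m)) {i : ℕ} (hi : i < m) :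
    wordN (cycleOfOneLine σ) (i + 1) = oneLine σ i + 1 := by
  rw [wordN_of_forall_sameCycle (forall_sameCycle_cycleOfOneLine σ) (by omega),
    cycleOfOneLine_pow_apply_zero σ (by omega), oneLine, dif_pos hi]
  exact congrArg Fin.val (decomposeFin_symm_apply_succ σ 0 ⟨i, hi⟩) |>.trans (by simp)

theorem consecC_cycleOfOneLine {P : ℕ → ℕ → ℕ → Prop} (hP₀ : ∀ b c, ¬ P 0 b c)
    (hP : ∀ a b c, P (a + 1) (b + 1) (c + 1) ↔ P a b c) (σ : Perm (Fin m)) :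
    consecC (cycleOfOneLine σ) P = consecLine m (oneLine σ) P := by
  rw [consecC_eq_consecLine (forall_sameCycle_cycleOfOneLine σ),
    consecLine_succ (by rw [wordN_cycleOfOneLine_zero]; exact hP₀ _ _)]
  refine consecLine_congr fun i hi => ?_
  rw [wordN_cycleOfOneLine_succ σ (by omega : i < m),
    wordN_cycleOfOneLine_succ σ (by omega : i + 1 < m),
    wordN_cycleOfOneLine_succ σ (by omega : i + 2 < m), hP]

/-- The number of single-cycle permutations of `[n]` with `k` cyclic occurrences of the
consecutive pattern 321 equals the number of permutations of `[n-1]` with `k` occurrences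
of 321 in consecutive positions of their one-line notation. -/
theorem single_cycle_consec_321 (n : ℕ) (hn : 1 ≤ n) (k : ℕ) :
    Nat.card {π : Equiv.Perm (Fin n) //
        cyc π = 1 ∧ consecC π (fun a b c => c < b ∧ b < a) = k}
      = Nat.card {σ : Equiv.Perm (Fin (n - 1)) //
          consecLine (n - 1) (oneLine σ) (fun a b c => c < b ∧ b < a) = k} := by
  obtain ⟨m, rfl⟩ : ∃ m, n = m + 1 := ⟨n - 1, by omega⟩
  have h321 (σ : Perm (Fin m)) :
      consecC (cycleOfOneLine σ) (fun a b c => c < b ∧ b < a)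
        = consecLine m (oneLine σ) (fun a b c => c < b ∧ b < a) :=
    consecC_cycleOfOneLine (by omega) (by omega) σ
  simp only [cyc_eq_one_iff, Nat.add_sub_cancel]
  symm
  refine Nat.card_congr ((cycleOfOneLineEquiv.subtypeEquiv fun σ => ?_).trans
    (Equiv.subtypeSubtypeEquivSubtypeInter _ _))
  rw [← h321]
  rfl
end
end
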